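/- In flow-firing with distinguished face σ starting from K (K σ = k ≥ 0, zero elsewhere), the potential ψ(F) = Σ_{τ : dist(σ,τ) ≤ k+1} (k − F τ)² strictly decreases with every firing step; hence the process terminates. -/
import Mathlib


def Nb (a b : ℤ × ℤ) : Prop := |a.1 - b.1| + |a.2 - b.2| = 1

def FinSupp (F : ℤ × ℤ → ℤ) : Prop := {τ | F τ ≠ 0}.Finite

/-- A firing step: neighbors `a`, `b` with `F a ≥ F b + 2`; `F a` decreases by 1 and
`F b` increases by 1. -/
def Step (F F' : ℤ × ℤ → ℤ) : Prop :=
  ∃ a b : ℤ × ℤ, Nb a b ∧ F b + 2 ≤ F a ∧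
    F' = Function.update (Function.update F a (F a - 1)) b (F b + 1)

/-- Manhattan distance between faces. -/
def mdist (a b : ℤ × ℤ) : ℤ := |a.1 - b.1| + |a.2 - b.2|

/-- Firing step for the process with distinguished face `σ`. -/
def StepD (σ : ℤ × ℤ) (F F' : ℤ × ℤ → ℤ) : Prop :=
  (∃ a b : ℤ × ℤ, a ≠ σ ∧ b ≠ σ ∧ Nb a b ∧ F b + 2 ≤ F a ∧
      F' = Function.update (Function.update F a (F a - 1)) b (F b + 1)) ∨
  (∃ a : ℤ × ℤ, Nb a σ ∧ F a < F σ ∧ F' = Function.update F a (F a + 1)) ∨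
  (∃ a : ℤ × ℤ, Nb a σ ∧ F σ < F a ∧ F' = Function.update F a (F a - 1))

/-- Initial configuration: `k` at `σ`, zero elsewhere. -/
def Kinit (σ : ℤ × ℤ) (k : ℤ) : ℤ × ℤ → ℤ := fun τ => if τ = σ then k else 0

lemma Nb_mdist {a b : ℤ × ℤ} (h : Nb a b) : mdist a b = 1 := h

lemma Nb_ne {a b : ℤ × ℤ} (h : Nb a b) : a ≠ b := by
  intro he; subst he; simp [Nb] at h

lemma mdist_comm (a b : ℤ × ℤ) : mdist a b = mdist b a := by
  unfold mdist; rw [abs_sub_comm a.1, abs_sub_comm a.2]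

lemma mdist_triangle (a b c : ℤ × ℤ) : mdist a c ≤ mdist a b + mdist b c := by
  unfold mdist
  have h1 := abs_sub_le a.1 b.1 c.1
  have h2 := abs_sub_le a.2 b.2 c.2
  linarith

lemma S_finite (σ : ℤ × ℤ) (k : ℤ) : ({τ : ℤ × ℤ | mdist σ τ ≤ k + 1}).Finite := by
  apply Set.Finite.subset (((Set.finite_Icc (σ.1 - (k+1)) (σ.1 + (k+1))).prod
    (Set.finite_Icc (σ.2 - (k+1)) (σ.2 + (k+1)))))
  intro τ hτ
  simp only [Set.mem_setOf_eq, mdist] at hτ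
  have h1 := abs_nonneg (σ.1 - τ.1)
  have h2 := abs_nonneg (σ.2 - τ.2)
  have h3 := abs_le.mp (show |σ.1 - τ.1| ≤ k + 1 by linarith)
  have h4 := abs_le.mp (show |σ.2 - τ.2| ≤ k + 1 by linarith)
  constructor <;> simp only [Set.mem_Icc] <;> omega

/-- The invariant satisfied by all reachable configurations. -/
def FInv (σ : ℤ × ℤ) (k : ℤ) (F : ℤ × ℤ → ℤ) : Prop :=
  F σ = k ∧ ∀ τ, τ ≠ σ → 0 ≤ F τ ∧ F τ ≤ max 0 (k + 1 - mdist σ τ)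

lemma inv_kinit (σ : ℤ × ℤ) (k : ℤ) : FInv σ k (Kinit σ k) := by
  constructor
  · simp [Kinit]
  · intro τ hτ
    simp [Kinit, hτ, le_max_left]

lemma inv_step (σ : ℤ × ℤ) (k : ℤ) (hk : 0 ≤ k) (F F' : ℤ × ℤ → ℤ)
    (hI : FInv σ k F) (hS : StepD σ F F') : FInv σ k F' := by
  obtain ⟨hσ, hB⟩ := hI
  rcases hS with ⟨a, b, ha, hb, hnb, hge, hF'⟩ | ⟨a, hnb, hlt, hF'⟩ | ⟨a, hnb, hlt, hF'⟩
  · -- internal firing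
    have hab := Nb_ne hnb
    have hda := hB a ha
    have hdb := hB b hb
    have hdab : mdist σ b ≤ mdist σ a + 1 := by
      have := mdist_triangle σ a b
      rw [Nb_mdist hnb] at this; linarith
    subst hF'
    refine ⟨?_, ?_⟩
    · simp [Function.update_apply, (Ne.symm hb), (Ne.symm ha), hσ]
    · intro τ hτ
      rcases eq_or_ne τ b with rfl | hτb
      · simp only [Function.update_self]
        constructor
        · linarith [hdb.1]
        · have h2 : (2:ℤ) ≤ max 0 (k + 1 - mdist σ a) := by linarith [hda.2, hdb.1]
          have : (2:ℤ) ≤ k + 1 - mdist σ a := by omega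
          have : F τ + 1 ≤ k + 1 - mdist σ τ := by
            have := hda.2; omega
          omega
      · rcases eq_or_ne τ a with rfl | hτa
        · simp only [Function.update_of_ne hab, Function.update_self]
          constructor
          · linarith [hdb.1]
          · linarith [hda.2]
        · simp only [Function.update_of_ne hτb, Function.update_of_ne hτa]
          exact hB τ hτ
  · -- pull toward neighbor of σ
    have haσ : a ≠ σ := Nb_ne hnb
    have hd : mdist σ a = 1 := by rw [mdist_comm]; exact Nb_mdist hnb
    subst hF'
    refine ⟨by simp [Function.update_apply, Ne.symm haσ, hσ], ?_⟩
    intro τ hτ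
    rcases eq_or_ne τ a with rfl | hτa
    · simp only [Function.update_self]
      rw [hσ] at hlt
      constructor
      · linarith [(hB τ haσ).1]
      · rw [hd]; omega
    · simp only [Function.update_of_ne hτa]; exact hB τ hτ
  · -- impossible given the invariant
    exfalso
    have haσ : a ≠ σ := Nb_ne hnb
    have hd : mdist σ a = 1 := by rw [mdist_comm]; exact Nb_mdist hnb
    have := (hB a haσ).2
    rw [hd, hσ] at *
    omega

lemma inv_reach (σ : ℤ × ℤ) (k : ℤ) (hk : 0 ≤ k) (F : ℤ × ℤ → ℤ)
    (h : Relation.ReflTransGen (StepD σ) (Kinit σ k) F) : FInv σ k F := by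
  induction h with
  | refl => exact inv_kinit σ k
  | tail _ hstep ih => exact inv_step σ k hk _ _ ih hstep

noncomputable def Tset (σ : ℤ × ℤ) (k : ℤ) : Finset (ℤ × ℤ) := (S_finite σ k).toFinset

lemma mem_Tset {σ : ℤ × ℤ} {k : ℤ} {a : ℤ × ℤ} : a ∈ Tset σ k ↔ mdist σ a ≤ k + 1 := by
  simp [Tset, Set.Finite.mem_toFinset]

lemma psi_eq (σ : ℤ × ℤ) (k : ℤ) (F : ℤ × ℤ → ℤ) :
    (∑ᶠ τ ∈ {τ : ℤ × ℤ | mdist σ τ ≤ k + 1}, (k - F τ) ^ 2) =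
      ∑ τ ∈ Tset σ k, (k - F τ) ^ 2 :=
  finsum_mem_eq_finite_toFinset_sum _ (S_finite σ k)

lemma decrease (σ : ℤ × ℤ) (k : ℤ) (hk : 0 ≤ k) (F F' : ℤ × ℤ → ℤ)
    (hI : FInv σ k F) (hS : StepD σ F F') :
    (∑ τ ∈ Tset σ k, (k - F' τ) ^ 2) < ∑ τ ∈ Tset σ k, (k - F τ) ^ 2 := by
  obtain ⟨hσ, hB⟩ := hI
  rcases hS with ⟨a, b, ha, hb, hnb, hge, hF'⟩ | ⟨a, hnb, hlt, hF'⟩ | ⟨a, hnb, hlt, hF'⟩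
  · have hab := Nb_ne hnb
    have hda := hB a ha
    have hdb := hB b hb
    have hdaa : mdist σ a ≤ k - 1 := by
      have := hda.2; have := hdb.1; omega
    have hdbb : mdist σ b ≤ k := by
      have := mdist_triangle σ a b
      rw [Nb_mdist hnb] at this; omega
    have haT : a ∈ Tset σ k := mem_Tset.mpr (by omega)
    have hbT : b ∈ Tset σ k := mem_Tset.mpr (by omega)
    have hfun : (fun τ => (k - F' τ) ^ 2) =
        Function.update (Function.update (fun τ => (k - F τ) ^ 2) a ((k - (F a - 1)) ^ 2))
          b ((k - (F b + 1)) ^ 2) := by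
      funext τ
      subst hF'
      rcases eq_or_ne τ b with rfl | hτb
      · simp
      · rcases eq_or_ne τ a with rfl | hτa
        · simp [Function.update_of_ne hab, Function.update_of_ne (Nb_ne hnb)]
        · simp [Function.update_of_ne hτb, Function.update_of_ne hτa]
    calc ∑ τ ∈ Tset σ k, (k - F' τ) ^ 2
        = ∑ τ ∈ Tset σ k, Function.update (Function.update (fun τ => (k - F τ) ^ 2) a
            ((k - (F a - 1)) ^ 2)) b ((k - (F b + 1)) ^ 2) τ := by
          rw [← hfun]
      _ = (k - (F b + 1)) ^ 2 + ∑ τ ∈ (Tset σ k).erase b,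
            Function.update (fun τ => (k - F τ) ^ 2) a ((k - (F a - 1)) ^ 2) τ := by
          rw [Finset.sum_update_of_mem hbT, Finset.erase_eq]
      _ = (k - (F b + 1)) ^ 2 + ((k - (F a - 1)) ^ 2 +
            ∑ τ ∈ ((Tset σ k).erase b).erase a, (k - F τ) ^ 2) := by
          rw [Finset.sum_update_of_mem (Finset.mem_erase.mpr ⟨hab, haT⟩)]
          simp [Finset.erase_eq]
      _ < (k - (F b)) ^ 2 + ((k - (F a)) ^ 2 +
            ∑ τ ∈ ((Tset σ k).erase b).erase a, (k - F τ) ^ 2) := by nlinarith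
      _ = (k - F b) ^ 2 + ∑ τ ∈ (Tset σ k).erase b, (k - F τ) ^ 2 := by
          rw [Finset.add_sum_erase _ (fun τ => (k - F τ) ^ 2)
            (Finset.mem_erase.mpr ⟨hab, haT⟩)]
      _ = ∑ τ ∈ Tset σ k, (k - F τ) ^ 2 :=
          Finset.add_sum_erase _ (fun τ => (k - F τ) ^ 2) hbT
  · have haσ : a ≠ σ := Nb_ne hnb
    have hd : mdist σ a = 1 := by rw [mdist_comm]; exact Nb_mdist hnb
    have haT : a ∈ Tset σ k := mem_Tset.mpr (by omega)
    rw [hσ] at hlt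
    have hfun : (fun τ => (k - F' τ) ^ 2) =
        Function.update (fun τ => (k - F τ) ^ 2) a ((k - (F a + 1)) ^ 2) := by
      funext τ
      subst hF'
      rcases eq_or_ne τ a with rfl | hτa
      · simp
      · simp [Function.update_of_ne hτa]
    calc ∑ τ ∈ Tset σ k, (k - F' τ) ^ 2
        = ∑ τ ∈ Tset σ k, Function.update (fun τ => (k - F τ) ^ 2) a
            ((k - (F a + 1)) ^ 2) τ := by rw [← hfun]
      _ = (k - (F a + 1)) ^ 2 + ∑ τ ∈ (Tset σ k).erase a, (k - F τ) ^ 2 := by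
          rw [Finset.sum_update_of_mem haT, Finset.erase_eq]
      _ < (k - F a) ^ 2 + ∑ τ ∈ (Tset σ k).erase a, (k - F τ) ^ 2 := by nlinarith
      _ = ∑ τ ∈ Tset σ k, (k - F τ) ^ 2 :=
          Finset.add_sum_erase _ (fun τ => (k - F τ) ^ 2) haT
  · exfalso
    have haσ : a ≠ σ := Nb_ne hnb
    have hd : mdist σ a = 1 := by rw [mdist_comm]; exact Nb_mdist hnb
    have := (hB a haσ).2
    rw [hd, hσ] at *
    omega

/-- The potential ψ strictly decreases at every step, and the process terminates. -/
theorem stmt8 (σ : ℤ × ℤ) (k : ℤ) (hk : 0 ≤ k) :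
    (∀ F F' : ℤ × ℤ → ℤ, Relation.ReflTransGen (StepD σ) (Kinit σ k) F →
      StepD σ F F' →
      (∑ᶠ τ ∈ {τ : ℤ × ℤ | mdist σ τ ≤ k + 1}, (k - F' τ) ^ 2) <
      ∑ᶠ τ ∈ {τ : ℤ × ℤ | mdist σ τ ≤ k + 1}, (k - F τ) ^ 2) ∧
    ¬ ∃ seq : ℕ → (ℤ × ℤ → ℤ), seq 0 = Kinit σ k ∧
      ∀ n, StepD σ (seq n) (seq (n + 1)) := by
  have hdec : ∀ F F' : ℤ × ℤ → ℤ, Relation.ReflTransGen (StepD σ) (Kinit σ k) F →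
      StepD σ F F' →
      (∑ᶠ τ ∈ {τ : ℤ × ℤ | mdist σ τ ≤ k + 1}, (k - F' τ) ^ 2) <
      ∑ᶠ τ ∈ {τ : ℤ × ℤ | mdist σ τ ≤ k + 1}, (k - F τ) ^ 2 := by
    intro F F' hreach hstep
    rw [psi_eq, psi_eq]
    exact decrease σ k hk F F' (inv_reach σ k hk F hreach) hstep
  refine ⟨hdec, ?_⟩
  rintro ⟨seq, h0, hstep⟩
  set ψ : (ℤ × ℤ → ℤ) → ℤ :=
    fun F => ∑ᶠ τ ∈ {τ : ℤ × ℤ | mdist σ τ ≤ k + 1}, (k - F τ) ^ 2 with hψ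
  have hreach : ∀ n, Relation.ReflTransGen (StepD σ) (Kinit σ k) (seq n) := by
    intro n
    induction n with
    | zero => rw [h0]
    | succ n ih => exact ih.tail (hstep n)
  have hmono : ∀ n : ℕ, ψ (seq n) + n ≤ ψ (seq 0) := by
    intro n
    induction n with
    | zero => simp
    | succ n ih =>
      have := hdec (seq n) (seq (n + 1)) (hreach n) (hstep n)
      push_cast
      push_cast at ih
      simp only [hψ] at *
      linarith
  have hnn : ∀ n : ℕ, 0 ≤ ψ (seq n) := by
    intro n
    have he : ψ (seq n) = ∑ τ ∈ Tset σ k, (k - seq n τ) ^ 2 := psi_eq σ k (seq n)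
    rw [he]
    exact Finset.sum_nonneg fun τ _ => sq_nonneg _
  have h1 := hmono ((ψ (seq 0)).toNat + 1)
  have h2 := hnn ((ψ (seq 0)).toNat + 1)
  have h3 : (0:ℤ) ≤ ψ (seq 0) := hnn 0
  omega
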